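/- Av(231)𝒜 = Av(2431). -/
import Mathlib


/-- A permutation of length `n` (a bijection of `{0, …, n-1}`, identified with the
sequence of its values), packaged with its length. -/
abbrev PermSig : Type := Σ n : ℕ, Equiv.Perm (Fin n)

/-- Pattern containment: the permutation `α` of length `k` is contained in the
permutation `τ` of length `n` if there is an increasing choice of positions on which
`τ` is order-isomorphic to `α`. -/
def Contains {k n : ℕ} (α : Equiv.Perm (Fin k)) (τ : Equiv.Perm (Fin n)) : Prop :=
  ∃ f : Fin k ↪o Fin n, ∀ i j : Fin k, α i < α j ↔ τ (f i) < τ (f j)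

/-- The avoidance class `Av B`: all permutations containing no member of `B`. -/
def Av (B : Set PermSig) : Set PermSig :=
  {τ : PermSig | ∀ β ∈ B, ¬ Contains β.2 τ.2}

/-- A pattern class: a set of permutations downward closed under pattern containment. -/
def IsPatternClass (C : Set PermSig) : Prop :=
  ∀ (k n : ℕ) (α : Equiv.Perm (Fin k)) (τ : Equiv.Perm (Fin n)),
    Contains α τ → (⟨n, τ⟩ : PermSig) ∈ C → (⟨k, α⟩ : PermSig) ∈ C

/-- The base relation of the poset `P(τ)` on values: `x ≺ y` whenever `x` appears
before `y` in `τ` and either `x > y`, or some value `z` appears between `x` and `y`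
in `τ` with `x < y < z`. -/
def PQBase {n : ℕ} (τ : Equiv.Perm (Fin n)) (x y : Fin n) : Prop :=
  τ.symm x < τ.symm y ∧
    (y < x ∨ ∃ z : Fin n, τ.symm x < τ.symm z ∧ τ.symm z < τ.symm y ∧ x < y ∧ y < z)

/-- The poset `P(τ)`: the transitive closure of the base relation. -/
def PQ {n : ℕ} (τ : Equiv.Perm (Fin n)) : Fin n → Fin n → Prop :=
  Relation.TransGen (PQBase τ)

/-- `σ` is a linear extension of `P(τ)`; equivalently, `(σ, τ)` is an allowable pair,
i.e. a priority queue can produce output `τ` from input `σ`. -/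
def Allowable {n : ℕ} (σ τ : Equiv.Perm (Fin n)) : Prop :=
  ∀ x y : Fin n, PQ τ x y → σ.symm x < σ.symm y

/-- `C𝒜`: the set of permutations obtainable by a priority queue from an input in `C`. -/
def ImageA (C : Set PermSig) : Set PermSig :=
  {τ : PermSig | ∃ σ : Equiv.Perm (Fin τ.1), (⟨τ.1, σ⟩ : PermSig) ∈ C ∧ Allowable σ τ.2}

/-- The pattern `231` (written 0-indexed). -/
noncomputable def p231 : Equiv.Perm (Fin 3) :=
  Equiv.ofBijective (![1, 2, 0] : Fin 3 → Fin 3) (by decide)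

/-- The pattern `2431` (written 0-indexed). -/
noncomputable def p2431 : Equiv.Perm (Fin 4) :=
  Equiv.ofBijective (![1, 3, 2, 0] : Fin 4 → Fin 4) (by decide)

/-! ### Auxiliary machinery -/

section Aux

variable {n : ℕ}

/-- `Contains` from a list of values whose positions are increasing. -/
lemma contains_of_values {k : ℕ} (α : Equiv.Perm (Fin k)) (τ : Equiv.Perm (Fin n))
    (v : Fin k → Fin n) (hpos : StrictMono fun i => τ.symm (v i))
    (hpat : ∀ i j, α i < α j ↔ v i < v j) : Contains α τ := by
  refine ⟨OrderEmbedding.ofStrictMono _ hpos, fun i j => ?_⟩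
  simpa using hpat i j

lemma strictMono3 {α : Type*} [Preorder α] {p q r : α} (h1 : p < q) (h2 : q < r) :
    StrictMono ![p, q, r] := by
  intro i j hij
  fin_cases i <;> fin_cases j <;>
    simp_all [Matrix.cons_val_zero, Matrix.cons_val_one, Matrix.head_cons] <;>
    first
      | exact h1 | exact h2 | exact h1.trans h2
      | exact absurd hij (by decide)

lemma strictMono4 {α : Type*} [Preorder α] {p q r s : α} (h1 : p < q) (h2 : q < r)
    (h3 : r < s) : StrictMono ![p, q, r, s] := by
  intro i j hij
  fin_cases i <;> fin_cases j <;>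
    simp_all [Matrix.cons_val_zero, Matrix.cons_val_one, Matrix.head_cons] <;>
    first
      | exact h1 | exact h2 | exact h3
      | exact h1.trans h2 | exact h2.trans h3 | exact (h1.trans h2).trans h3
      | exact absurd hij (by decide)

/-- A `231` pattern from three values `A < B < C` appearing in order `B, C, A`. -/
lemma contains231_of {σ : Equiv.Perm (Fin n)} {A B C : Fin n} (hAB : A < B) (hBC : B < C)
    (h1 : σ.symm B < σ.symm C) (h2 : σ.symm C < σ.symm A) : Contains p231 σ := by
  refine contains_of_values p231 σ ![B, C, A] ?_ ?_
  · have := strictMono3 h1 h2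
    intro i j hij
    have h := this hij
    fin_cases i <;> fin_cases j <;> simp_all
  · intro i j
    fin_cases i <;> fin_cases j <;>
      simp only [Matrix.cons_val_zero, Matrix.cons_val_one, Matrix.head_cons,
        Matrix.cons_val_two, Matrix.tail_cons] <;>
      first
        | exact iff_of_true (by decide) hBC
        | exact iff_of_true (by decide) hAB
        | exact iff_of_true (by decide) (hAB.trans hBC)
        | exact iff_of_false (by decide) (lt_irrefl _)
        | exact iff_of_false (by decide) (asymm hBC)
        | exact iff_of_false (by decide) (asymm hAB)
        | exact iff_of_false (by decide) (asymm (hAB.trans hBC))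

/-- A `2431` pattern from four values `A < B < C < D` appearing in order `B, D, C, A`. -/
lemma contains2431_of {τ : Equiv.Perm (Fin n)} {A B C D : Fin n}
    (hAB : A < B) (hBC : B < C) (hCD : C < D)
    (h1 : τ.symm B < τ.symm D) (h2 : τ.symm D < τ.symm C) (h3 : τ.symm C < τ.symm A) :
    Contains p2431 τ := by
  refine contains_of_values p2431 τ ![B, D, C, A] ?_ ?_
  · have := strictMono4 h1 h2 h3
    intro i j hij
    have h := this hij
    fin_cases i <;> fin_cases j <;> simp_all
  · have hBD : B < D := hBC.trans hCD
    have hAC : A < C := hAB.trans hBC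
    have hAD : A < D := hAC.trans hCD
    intro i j
    fin_cases i <;> fin_cases j <;>
      simp only [Matrix.cons_val_zero, Matrix.cons_val_one, Matrix.head_cons,
        Matrix.cons_val_two, Matrix.tail_cons, Matrix.cons_val_three] <;>
      first
        | exact iff_of_true (by decide) hAB
        | exact iff_of_true (by decide) hBC
        | exact iff_of_true (by decide) hCD
        | exact iff_of_true (by decide) hBD
        | exact iff_of_true (by decide) hAC
        | exact iff_of_true (by decide) hAD
        | exact iff_of_false (by decide) (lt_irrefl _)
        | exact iff_of_false (by decide) (asymm hAB)
        | exact iff_of_false (by decide) (asymm hBC)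
        | exact iff_of_false (by decide) (asymm hCD)
        | exact iff_of_false (by decide) (asymm hBD)
        | exact iff_of_false (by decide) (asymm hAC)
        | exact iff_of_false (by decide) (asymm hAD)

/-- The witness relation: `x < y`, and some `z > y` lies between the positions of
`x` and `y` in `τ`. -/
def Wit (τ : Equiv.Perm (Fin n)) (x y : Fin n) : Prop :=
  x < y ∧ ∃ z : Fin n, τ.symm x < τ.symm z ∧ τ.symm z < τ.symm y ∧ y < z

instance {τ : Equiv.Perm (Fin n)} {x y : Fin n} : Decidable (Wit τ x y) := by
  unfold Wit; infer_instance

/-- The key of a value `y`: one plus the largest `x` with `Wit τ x y` (zero if none). -/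
def K (τ : Equiv.Perm (Fin n)) (y : Fin n) : ℕ :=
  (Finset.univ.filter fun x => Wit τ x y).sup fun x => (x : ℕ) + 1

lemma K_le (τ : Equiv.Perm (Fin n)) (y : Fin n) : K τ y ≤ (y : ℕ) := by
  unfold K
  apply Finset.sup_le
  intro x hx
  rw [Finset.mem_filter] at hx
  exact hx.2.1

lemma K_ge {τ : Equiv.Perm (Fin n)} {x y : Fin n} (h : Wit τ x y) : (x : ℕ) + 1 ≤ K τ y := by
  unfold K
  apply Finset.le_sup (f := fun x : Fin n => (x : ℕ) + 1)
  rw [Finset.mem_filter]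
  exact ⟨Finset.mem_univ _, h⟩

lemma K_spec {τ : Equiv.Perm (Fin n)} {y : Fin n} (h : 0 < K τ y) :
    ∃ x, Wit τ x y ∧ K τ y = (x : ℕ) + 1 := by
  classical
  unfold K at h ⊢
  by_cases hne : (Finset.univ.filter fun x => Wit τ x y).Nonempty
  · obtain ⟨x, hx, hsup⟩ := Finset.exists_mem_eq_sup _ hne fun x : Fin n => (x : ℕ) + 1
    rw [Finset.mem_filter] at hx
    exact ⟨x, hx.2, by convert hsup using 2⟩
  · rw [Finset.not_nonempty_iff_eq_empty] at hne
    rw [hne] at h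
    simp at h

/-- Monotonicity of the key along inversions of `τ`, given that `τ` avoids `2431`. -/
lemma K_mono_inv {τ : Equiv.Perm (Fin n)} (hav : ¬ Contains p2431 τ) {x y : Fin n}
    (hyx : y < x) (hpos : τ.symm x < τ.symm y) : K τ x ≤ K τ y := by
  unfold K
  apply Finset.sup_le
  intro u hu
  rw [Finset.mem_filter] at hu
  obtain ⟨hux, z, hz1, hz2, hxz⟩ := hu.2
  have huy : u < y := by
    rcases lt_trichotomy u y with h | h | h
    · exact h
    · exfalso
      subst h
      exact absurd ((hz1.trans hz2).trans hpos) (lt_irrefl _)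
    · exfalso
      exact hav (contains2431_of h hux hxz hz1 hz2 hpos)
  apply K_ge (τ := τ) (x := u) (y := y)
  exact ⟨huy, z, hz1, hz2.trans hpos, hyx.trans hxz⟩

/-- The crucial combinatorial fact: if `a < b < c` then we cannot have
`K b < K c ≤ K a`. -/
lemma key_no231 {τ : Equiv.Perm (Fin n)} {a b c : Fin n} (hab : a < b) (hbc : b < c)
    (h1 : K τ b < K τ c) (h2 : K τ c ≤ K τ a) : False := by
  have hc0 : 0 < K τ c := Nat.lt_of_le_of_lt (Nat.zero_le _) h1
  obtain ⟨v, hv, hKc⟩ := K_spec hc0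
  have hva : (v : ℕ) < (a : ℕ) := by
    have := K_le τ a
    omega
  obtain ⟨hvc, z, hz1, hz2, hcz⟩ := hv
  have hvb : v < b := lt_trans (Fin.lt_def.mpr hva) hab
  rcases lt_trichotomy (τ.symm z) (τ.symm b) with h | h | h
  · have : (v : ℕ) + 1 ≤ K τ b := K_ge ⟨hvb, z, hz1, h, hbc.trans hcz⟩
    omega
  · have : z = b := τ.symm.injective h
    subst this
    exact absurd (hbc.trans hcz) (lt_irrefl _)
  · have h3 : (b : ℕ) + 1 ≤ K τ c := K_ge ⟨hbc, z, h, hz2, hcz⟩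
    have hab' : (a : ℕ) < (b : ℕ) := hab
    omega

/-- The combined sorting key: primarily by `K`, then by decreasing value. -/
def kappa (τ : Equiv.Perm (Fin n)) (y : Fin n) : ℕ :=
  K τ y * n + (n - 1 - (y : ℕ))

lemma kappa_lt_iff {τ : Equiv.Perm (Fin n)} {x y : Fin n} :
    kappa τ x < kappa τ y ↔ K τ x < K τ y ∨ (K τ x = K τ y ∧ y < x) := by
  have hx : (x : ℕ) < n := x.isLt
  have hy : (y : ℕ) < n := y.isLt
  have hfin : (y < x) ↔ ((y : ℕ) < (x : ℕ)) := Fin.lt_def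
  unfold kappa
  rcases lt_trichotomy (K τ x) (K τ y) with h | h | h
  · have hm : (K τ x + 1) * n ≤ K τ y * n := Nat.mul_le_mul_right n h
    have he : (K τ x + 1) * n = K τ x * n + n := by ring
    constructor
    · intro _; exact Or.inl h
    · intro _; omega
  · rw [h, hfin]
    constructor
    · intro hlt; right; exact ⟨rfl, by omega⟩
    · rintro (hc | ⟨-, hc⟩)
      · omega
      · omega
  · have hm : (K τ y + 1) * n ≤ K τ x * n := Nat.mul_le_mul_right n h
    have he : (K τ y + 1) * n = K τ y * n + n := by ring
    constructor
    · intro hlt; exfalso; omega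
    · rintro (hc | ⟨hc, -⟩) <;> omega

lemma kappa_inj (τ : Equiv.Perm (Fin n)) : Function.Injective (kappa τ) := by
  intro x y hxy
  rcases lt_trichotomy x y with h | h | h
  · exfalso
    have hx : (x : ℕ) < n := x.isLt
    have hy : (y : ℕ) < n := y.isLt
    have h' : (x : ℕ) < (y : ℕ) := h
    rcases lt_trichotomy (K τ x) (K τ y) with hk | hk | hk
    · have := (kappa_lt_iff (τ := τ) (x := x) (y := y)).mpr (Or.inl hk)
      omega
    · unfold kappa at hxy
      rw [hk] at hxy
      omega
    · have := (kappa_lt_iff (τ := τ) (x := y) (y := x)).mpr (Or.inl hk)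
      omega
  · exact h
  · exfalso
    have hx : (x : ℕ) < n := x.isLt
    have hy : (y : ℕ) < n := y.isLt
    have h' : (y : ℕ) < (x : ℕ) := h
    rcases lt_trichotomy (K τ x) (K τ y) with hk | hk | hk
    · have := (kappa_lt_iff (τ := τ) (x := x) (y := y)).mpr (Or.inl hk)
      omega
    · unfold kappa at hxy
      rw [hk] at hxy
      omega
    · have := (kappa_lt_iff (τ := τ) (x := y) (y := x)).mpr (Or.inl hk)
      omega

/-- For every injective key there is a permutation sorting by that key. -/
lemma exists_perm_of_key (g : Fin n → ℕ) (hg : Function.Injective g) :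
    ∃ σ : Equiv.Perm (Fin n), ∀ x y, σ.symm x < σ.symm y ↔ g x < g y := by
  classical
  set s : Finset ℕ := Finset.univ.image g with hs
  have hcard : s.card = n := by
    rw [hs, Finset.card_image_of_injective _ hg, Finset.card_univ, Fintype.card_fin]
  set e := s.orderIsoOfFin hcard with he
  have hmem : ∀ x : Fin n, g x ∈ s := fun x => Finset.mem_image_of_mem g (Finset.mem_univ x)
  set g' : Fin n → {a // a ∈ s} := fun x => ⟨g x, hmem x⟩ with hg'
  have hbij : Function.Bijective g' := by
    rw [Fintype.bijective_iff_injective_and_card]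
    constructor
    · intro a b hab
      exact hg (congrArg Subtype.val hab)
    · rw [Fintype.card_coe, hcard, Fintype.card_fin]
  refine ⟨((Equiv.ofBijective g' hbij).trans e.symm.toEquiv).symm, fun x y => ?_⟩
  rw [Equiv.symm_symm]
  show e.symm (g' x) < e.symm (g' y) ↔ g x < g y
  rw [e.symm.lt_iff_lt]
  exact Subtype.mk_lt_mk

end Aux

/-- `Av(231)𝒜 = Av(2431)`. -/
theorem imageA_av231 :
    ImageA (Av {(⟨3, p231⟩ : PermSig)}) = Av {(⟨4, p2431⟩ : PermSig)} := by
  apply Set.ext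
  rintro ⟨n, τ⟩
  constructor
  · -- ⊆ : if τ is obtainable from a 231-avoider, then τ avoids 2431
    rintro ⟨σ, hσC, hallow⟩
    intro β hβ
    rw [Set.mem_singleton_iff] at hβ
    subst hβ
    rintro ⟨f, hf⟩
    -- values of the 2431 occurrence
    set v : Fin 4 → Fin n := fun i => τ (f i) with hv
    have hmono : StrictMono f := f.strictMono
    have h30 : v 3 < v 0 := (hf 3 0).mp (by decide)
    have h02 : v 0 < v 2 := (hf 0 2).mp (by decide)
    have h21 : v 2 < v 1 := (hf 2 1).mp (by decide)
    have hsymm : ∀ i, τ.symm (v i) = f i := fun i => τ.symm_apply_apply (f i)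
    have hb1 : PQBase τ (v 0) (v 2) := by
      refine ⟨by rw [hsymm, hsymm]; exact hmono (by decide), Or.inr ⟨v 1, ?_, ?_, h02, h21⟩⟩
      · rw [hsymm, hsymm]; exact hmono (by decide)
      · rw [hsymm, hsymm]; exact hmono (by decide)
    have hb2 : PQBase τ (v 2) (v 3) := by
      refine ⟨by rw [hsymm, hsymm]; exact hmono (by decide), Or.inl ?_⟩
      exact h30.trans h02
    have hp1 : σ.symm (v 0) < σ.symm (v 2) :=
      hallow _ _ (Relation.TransGen.single hb1)
    have hp2 : σ.symm (v 2) < σ.symm (v 3) :=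
      hallow _ _ (Relation.TransGen.single hb2)
    exact hσC ⟨3, p231⟩ rfl (contains231_of h30 h02 hp1 hp2)
  · -- ⊇ : if τ avoids 2431, construct a 231-avoiding allowable input
    intro hτ
    have hav : ¬ Contains p2431 τ := hτ ⟨4, p2431⟩ rfl
    obtain ⟨σ, hσ⟩ := exists_perm_of_key (kappa τ) (kappa_inj τ)
    refine ⟨σ, ?_, ?_⟩
    · -- σ avoids 231
      intro β hβ
      rw [Set.mem_singleton_iff] at hβ
      subst hβ
      rintro ⟨f, hf⟩
      set u : Fin 3 → Fin n := fun i => σ (f i) with hu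
      have hmono : StrictMono f := f.strictMono
      have h20 : u 2 < u 0 := (hf 2 0).mp (by decide)
      have h01 : u 0 < u 1 := (hf 0 1).mp (by decide)
      have hsymm : ∀ i, σ.symm (u i) = f i := fun i => σ.symm_apply_apply (f i)
      have hk01 : kappa τ (u 0) < kappa τ (u 1) := by
        rw [← hσ]
        rw [hsymm, hsymm]
        exact hmono (by decide)
      have hk12 : kappa τ (u 1) < kappa τ (u 2) := by
        rw [← hσ]
        rw [hsymm, hsymm]
        exact hmono (by decide)
      have hK01 : K τ (u 0) < K τ (u 1) := by
        rcases kappa_lt_iff.mp hk01 with h | ⟨-, h⟩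
        · exact h
        · exact absurd h01 (asymm h)
      have hK12 : K τ (u 1) ≤ K τ (u 2) := by
        rcases kappa_lt_iff.mp hk12 with h | ⟨h, -⟩
        · exact h.le
        · exact h.le
      exact key_no231 h20 h01 hK01 hK12
    · -- σ is allowable for τ
      have hbase : ∀ x y : Fin n, PQBase τ x y → σ.symm x < σ.symm y := by
        intro x y hxy
        rw [hσ]
        obtain ⟨hpos, hcase⟩ := hxy
        rcases hcase with hyx | ⟨z, hz1, hz2, hxylt, hyz⟩
        · rcases Nat.lt_or_ge (K τ x) (K τ y) with h | h
          · exact kappa_lt_iff.mpr (Or.inl h)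
          · have h' : K τ x ≤ K τ y := K_mono_inv hav hyx hpos
            exact kappa_lt_iff.mpr (Or.inr ⟨le_antisymm h' h, hyx⟩)
        · apply kappa_lt_iff.mpr
          left
          have h1 : (x : ℕ) + 1 ≤ K τ y := K_ge ⟨hxylt, z, hz1, hz2, hyz⟩
          have h2 : K τ x ≤ (x : ℕ) := K_le τ x
          omega
      intro x y hxy
      induction hxy with
      | single h => exact hbase _ _ h
      | tail _ h ih => exact ih.trans (hbase _ _ h)
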